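/- Stability of weight-linear convergence under Cauchy products (Lemma "weight-convergence-product-stability" of the paper, in normalized form): Fix an integer r ≥ 1 and ρ ∈ (ℤ_{≥1})^r. Let (p_m)_{m∈ℕ^r} and (q_m)_{m∈ℕ^r} be families in R that both converge ρ-weight-linearly: there exist δ, δ' > 0 and i₀, i₀' ∈ ℕ such that w(p_m) < −δ·⟨ρ,m⟩ whenever ⟨ρ,m⟩ ≥ i₀, and w(q_m) < −δ'·⟨ρ,m⟩ whenever ⟨ρ,m⟩ ≥ i₀'. Define the convolution r_m = Σ_{m' ≤ m} p_{m'}·q_{m−m'}. Then (r_m) converges ρ-weight-linearly: there exists j₀ ∈ ℕ such that w(r_m) < −(min(δ, δ')/2)·⟨ρ,m⟩ for every m ∈ ℕ^r with ⟨ρ,m⟩ ≥ j₀. -/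

import Mathlib

open Finset

/-- The weight function, viewed with values in `ℝ ∪ {-∞}`. -/
noncomputable def weightR {R : Type*} (w : R → WithBot ℤ) (x : R) : WithBot ℝ :=
  (w x).map (fun n : ℤ => (n : ℝ))

/-- The pairing `⟨ρ, m⟩ = ∑ α, ρ α * m α`. -/
def pairing {r : ℕ} (ρ m : Fin r → ℕ) : ℕ := ∑ α, ρ α * m α

/-! Each family obeys an affine bound valid for every index, `w(p_m) ≤ C - δ⟨ρ, m⟩`: since all
`ρ_α ≥ 1`, only finitely many `m` have `⟨ρ, m⟩ < i₀`, and their weights are absorbed into `C`.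
As `⟨ρ, m'⟩ + ⟨ρ, m - m'⟩ = ⟨ρ, m⟩`, every term of the convolution then has weight at most
`C + C' - min(δ, δ')⟨ρ, m⟩`, which is below `-(min(δ, δ')/2)⟨ρ, m⟩` once `⟨ρ, m⟩` is large;
the weight of a finite sum is below the largest weight of its terms. -/

lemma WithBot.monotone_map_intCast : Monotone (WithBot.map (fun n : ℤ => (n : ℝ))) :=
  WithBot.monotone_map_iff.mpr fun _ _ ↦ Int.cast_le.mpr

section Weight

variable {R : Type*} (w : R → WithBot ℤ)

lemma weightR_mul_le [Mul R] (hwmul : ∀ x y : R, w (x * y) ≤ w x + w y) (x y : R) :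
    weightR w (x * y) ≤ weightR w x + weightR w y :=
  (WithBot.monotone_map_intCast (hwmul x y)).trans_eq (WithBot.map_add (Int.castAddHom ℝ) _ _)

lemma weightR_add_le [Add R] (hwadd : ∀ x y : R, w (x + y) ≤ max (w x) (w y)) (x y : R) :
    weightR w (x + y) ≤ max (weightR w x) (weightR w y) :=
  (WithBot.monotone_map_intCast (hwadd x y)).trans_eq WithBot.monotone_map_intCast.map_max

lemma weightR_sum_lt [AddCommMonoid R] (hw0 : w 0 = ⊥)
    (hwadd : ∀ x y : R, w (x + y) ≤ max (w x) (w y)) {ι : Type*} {s : Finset ι}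
    {f : ι → R} {c : ℝ} (hf : ∀ i ∈ s, weightR w (f i) < c) :
    weightR w (∑ i ∈ s, f i) < c :=
  Finset.sum_induction f (fun x ↦ weightR w x < c)
    (fun x y hx hy ↦ (weightR_add_le w hwadd x y).trans_lt (max_lt hx hy))
    (by simp [weightR, hw0]) hf

end Weight

section Pairing

variable {r : ℕ} (ρ : Fin r → ℕ)

lemma pairing_add (a b : Fin r → ℕ) : pairing ρ (a + b) = pairing ρ a + pairing ρ b := by
  simp only [pairing, Pi.add_apply, mul_add, sum_add_distrib]

lemma pairing_add_pairing_sub {m' m : Fin r → ℕ} (h : m' ≤ m) :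
    pairing ρ m' + pairing ρ (m - m') = pairing ρ m := by
  rw [← pairing_add, add_tsub_cancel_of_le h]

lemma le_pairing (hρ : ∀ α, 1 ≤ ρ α) (m : Fin r → ℕ) (α : Fin r) : m α ≤ pairing ρ m :=
  calc m α ≤ ρ α * m α := Nat.le_mul_of_pos_left _ (hρ α)
    _ ≤ pairing ρ m :=
      single_le_sum (f := fun β ↦ ρ β * m β) (fun _ _ ↦ Nat.zero_le _) (mem_univ α)

lemma finite_setOf_pairing_lt (hρ : ∀ α, 1 ≤ ρ α) (i : ℕ) :
    {m : Fin r → ℕ | pairing ρ m < i}.Finite :=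
  (Set.finite_Iic fun _ ↦ i).subset fun m hm α ↦ ((le_pairing ρ hρ m α).trans_lt hm).le

lemma exists_forall_le_sub_mul_pairing (hρ : ∀ α, 1 ≤ ρ α) (f : (Fin r → ℕ) → WithBot ℝ)
    {δ : ℝ} (hδ : 0 ≤ δ) {i₀ : ℕ}
    (hf : ∀ m, i₀ ≤ pairing ρ m → f m < ((-(δ * (pairing ρ m : ℝ)) : ℝ) : WithBot ℝ)) :
    ∃ C : ℝ, ∀ m, f m ≤ ((C - δ * (pairing ρ m : ℝ) : ℝ) : WithBot ℝ) := by
  obtain ⟨A, hA⟩ : ∃ A : ℝ, ∀ m, pairing ρ m < i₀ → f m ≤ A := by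
    obtain ⟨B, hB⟩ := ((finite_setOf_pairing_lt ρ hρ i₀).image f).bddAbove
    exact ⟨B.unbotD 0, fun m hm ↦ (hB ⟨m, hm, rfl⟩).trans (WithBot.le_coe_unbotD B 0)⟩
  refine ⟨max 0 (A + δ * i₀), fun m ↦ ?_⟩
  rcases lt_or_ge (pairing ρ m) i₀ with hm | hm
  · refine (hA m hm).trans (WithBot.coe_le_coe.mpr ?_)
    have : δ * pairing ρ m ≤ δ * i₀ := mul_le_mul_of_nonneg_left (by exact_mod_cast hm.le) hδ
    linarith [le_max_right 0 (A + δ * i₀)]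
  · exact (hf m hm).le.trans (WithBot.coe_le_coe.mpr (by linarith [le_max_left 0 (A + δ * i₀)]))

end Pairing

theorem weight_linear_convergence_stable_under_cauchy_product_general
    {R : Type*} [CommRing R] (w : R → WithBot ℤ)
    (hw0 : w 0 = ⊥)
    (hwadd : ∀ x y : R, w (x + y) ≤ max (w x) (w y))
    (hwmul : ∀ x y : R, w (x * y) ≤ w x + w y)
    (r : ℕ) (ρ : Fin r → ℕ) (hρ : ∀ α, 1 ≤ ρ α)
    (p q : (Fin r → ℕ) → R)
    (δ δ' : ℝ) (hδ : 0 < δ) (hδ' : 0 < δ')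
    (i₀ i₀' : ℕ)
    (hp : ∀ m : Fin r → ℕ, i₀ ≤ pairing ρ m →
      weightR w (p m) < ((-(δ * (pairing ρ m : ℝ)) : ℝ) : WithBot ℝ))
    (hq : ∀ m : Fin r → ℕ, i₀' ≤ pairing ρ m →
      weightR w (q m) < ((-(δ' * (pairing ρ m : ℝ)) : ℝ) : WithBot ℝ)) :
    ∃ j₀ : ℕ, ∀ m : Fin r → ℕ, j₀ ≤ pairing ρ m →
      weightR w (∑ m' ∈ Finset.Iic m, p m' * q (m - m')) <
        ((-(min δ δ' / 2 * (pairing ρ m : ℝ)) : ℝ) : WithBot ℝ) := by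
  obtain ⟨C, hC⟩ := exists_forall_le_sub_mul_pairing ρ hρ _ hδ.le hp
  obtain ⟨C', hC'⟩ := exists_forall_le_sub_mul_pairing ρ hρ _ hδ'.le hq
  have hδ₀ : 0 < min δ δ' := lt_min hδ hδ'
  obtain ⟨j₀, hj₀⟩ := exists_nat_gt (2 * (C + C') / min δ δ')
  refine ⟨j₀, fun m hm ↦ weightR_sum_lt w hw0 hwadd fun m' hm' ↦ ?_⟩
  have hsplit := pairing_add_pairing_sub ρ (mem_Iic.mp hm')
  set n := pairing ρ m'
  set n' := pairing ρ (m - m')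
  have hN : 2 * (C + C') < min δ δ' * (n + n' : ℕ) :=
    (div_lt_iff₀' hδ₀).mp (hj₀.trans_le (by rw [hsplit]; exact_mod_cast hm))
  calc weightR w (p m' * q (m - m'))
      ≤ ((C - δ * n : ℝ) : WithBot ℝ) + ((C' - δ' * n' : ℝ) : WithBot ℝ) :=
        (weightR_mul_le w hwmul _ _).trans (add_le_add (hC m') (hC' (m - m')))
    _ < ((-(min δ δ' / 2 * (pairing ρ m : ℝ)) : ℝ) : WithBot ℝ) := by
      rw [← WithBot.coe_add, WithBot.coe_lt_coe, ← hsplit]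
      push_cast at hN ⊢
      have hmin : min δ δ' * (n + n') ≤ δ * n + δ' * n' := by
        rw [mul_add]
        exact add_le_add (mul_le_mul_of_nonneg_right (min_le_left δ δ') n.cast_nonneg)
          (mul_le_mul_of_nonneg_right (min_le_right δ δ') n'.cast_nonneg)
      linarith

theorem weight_linear_convergence_stable_under_cauchy_product
    {R : Type*} [CommRing R] (w : R → WithBot ℤ)
    (hw0 : w 0 = ⊥)
    (hwadd : ∀ x y : R, w (x + y) ≤ max (w x) (w y))
    (hwmul : ∀ x y : R, w (x * y) ≤ w x + w y)
    (r : ℕ) (hr : 1 ≤ r) (ρ : Fin r → ℕ) (hρ : ∀ α, 1 ≤ ρ α)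
    (p q : (Fin r → ℕ) → R)
    (δ δ' : ℝ) (hδ : 0 < δ) (hδ' : 0 < δ')
    (i₀ i₀' : ℕ)
    (hp : ∀ m : Fin r → ℕ, i₀ ≤ pairing ρ m →
      weightR w (p m) < ((-(δ * (pairing ρ m : ℝ)) : ℝ) : WithBot ℝ))
    (hq : ∀ m : Fin r → ℕ, i₀' ≤ pairing ρ m →
      weightR w (q m) < ((-(δ' * (pairing ρ m : ℝ)) : ℝ) : WithBot ℝ)) :
    ∃ j₀ : ℕ, ∀ m : Fin r → ℕ, j₀ ≤ pairing ρ m →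
      weightR w (∑ m' ∈ Finset.Iic m, p m' * q (m - m')) <
        ((-(min δ δ' / 2 * (pairing ρ m : ℝ)) : ℝ) : WithBot ℝ) :=
  weight_linear_convergence_stable_under_cauchy_product_general w hw0 hwadd hwmul r ρ hρ p q δ δ' hδ
    hδ' i₀ i₀' hp hq
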